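/- arXiv:2512.17718 — 4 statements merged into one kernel-verified Lean document; each statement's English description precedes it below -/
import Mathlib

section
/- If C > 1 is a real number and p ∈ (0, 1/2) satisfies log p = C · log(1 - p) (equivalently (1-p)^C = p), then (1 - p)² > C · p²; equivalently, 1/p² > C/(1-p)². -/
/-!
Dividing by `log (1 - p) < 0`, the claim becomes `φ p > 0` for
`φ t = t² log t - (1 - t)² log (1 - t)`. Its derivative is `1 - 2 H(t)`, with `H` the binary
entropy, which increases on `[0, 1/2]`; so `φ` is strictly concave there, and it vanishes at both
endpoints (at `0` because `log 0 = 0`, which agrees with the limit of `t² log t`).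
-/

open Real Set

lemma hasDerivAt_sq_mul_log {x : ℝ} (hx : x ≠ 0) :
    HasDerivAt (fun t ↦ t ^ 2 * log t) (2 * x * log x + x) x :=
  ((hasDerivAt_pow 2 x).mul (hasDerivAt_log hx)).congr_deriv (by field_simp; ring)

lemma continuous_sq_mul_log : Continuous fun t : ℝ ↦ t ^ 2 * log t :=
  (continuous_id.mul continuous_mul_log).congr fun t ↦ by
    simp only [Pi.mul_apply, id]; ring

lemma hasDerivAt_sq_mul_log_sub_sq_mul_log_one_sub {x : ℝ} (hx₀ : x ≠ 0) (hx₁ : x ≠ 1) :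
    HasDerivAt (fun t ↦ t ^ 2 * log t - (1 - t) ^ 2 * log (1 - t)) (1 - 2 * binEntropy x) x := by
  have hsym := (hasDerivAt_sq_mul_log (sub_ne_zero.2 hx₁.symm)).comp x
    ((hasDerivAt_id' x).const_sub 1)
  refine ((hasDerivAt_sq_mul_log hx₀).sub hsym).congr_deriv ?_
  simp only [binEntropy, log_inv]
  ring

lemma strictConcaveOn_sq_mul_log_sub_sq_mul_log_one_sub :
    StrictConcaveOn ℝ (Icc 0 2⁻¹) fun t ↦ t ^ 2 * log t - (1 - t) ^ 2 * log (1 - t) := by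
  refine StrictAntiOn.strictConcaveOn_of_deriv (convex_Icc _ _) ?_ ?_
  · exact (continuous_sq_mul_log.sub
      (continuous_sq_mul_log.comp (continuous_const.sub continuous_id))).continuousOn
  · rw [interior_Icc]
    intro x hx y hy hxy
    have hderiv : ∀ z ∈ Ioo (0 : ℝ) 2⁻¹, deriv (fun t ↦ t ^ 2 * log t - (1 - t) ^ 2 * log (1 - t)) z
        = 1 - 2 * binEntropy z := fun z hz ↦
      (hasDerivAt_sq_mul_log_sub_sq_mul_log_one_sub hz.1.ne' (by linarith [hz.2])).deriv
    rw [hderiv x hx, hderiv y hy]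
    linarith [binEntropy_strictMonoOn (Ioo_subset_Icc_self hx) (Ioo_subset_Icc_self hy) hxy]

lemma sq_mul_log_one_sub_lt_sq_mul_log {p : ℝ} (hp₀ : 0 < p) (hp : p < 2⁻¹) :
    (1 - p) ^ 2 * log (1 - p) < p ^ 2 * log p := by
  have h := strictConcaveOn_sq_mul_log_sub_sq_mul_log_one_sub.lt_on_openSegment
    (left_mem_Icc.2 (by norm_num)) (right_mem_Icc.2 (by norm_num)) (by norm_num)
    (by rw [openSegment_eq_Ioo (by norm_num)]; exact ⟨hp₀, hp⟩)
  norm_num at h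
  linarith

theorem stmt_4_general (C p : ℝ) (hp0 : 0 < p) (hp2 : p < 1 / 2)
    (h : Real.log p = C * Real.log (1 - p)) :
    C * p ^ 2 < (1 - p) ^ 2 := by
  have hlog : log (1 - p) < 0 := log_neg (by linarith) (by linarith)
  have key := sq_mul_log_one_sub_lt_sq_mul_log hp0 (by linarith)
  rw [h, ← mul_assoc, mul_comm _ C] at key
  exact (mul_lt_mul_right_of_neg hlog).1 key

/-- If `C > 1` and `p ∈ (0, 1/2)` satisfies `log p = C log (1 - p)`
(equivalently `(1-p)^C = p`), then `(1 - p)² > C p²`. -/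
theorem stmt_4 (C p : ℝ) (hC : 1 < C) (hp0 : 0 < p) (hp2 : p < 1 / 2)
    (h : Real.log p = C * Real.log (1 - p)) :
    C * p ^ 2 < (1 - p) ^ 2 :=
  stmt_4_general C p hp0 hp2 h
end

section
/- Let d ≥ 1 be an integer, let x be a random vector in ℝ^d whose d coordinates are independent Gaussians N(0, 1/d), and let δ ∈ (0, 1). Then the probability that the Euclidean norm ‖x‖₂ lies in the open interval (1 - δ, 1 + δ) is at least 1 − 2·exp(−δ²d/10). -/
open MeasureTheory ProbabilityTheory

/-- Law of a random vector in `ℝ^d` with i.i.d. `N(0, 1/d)` coordinates. -/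
noncomputable def gaussianVec (d : ℕ) : Measure (Fin d → ℝ) :=
  Measure.pi fun _ => gaussianReal 0 (d : NNReal)⁻¹

/-!
Write `S x = ∑ i, x i ^ 2`. Its summands are independent, and a centred Gaussian of variance `v`
has `E[exp (t y²)] = (1 - 2 t v)^(-1/2)` (a Gaussian integral), so the Chernoff bound at
`t = ± d δ / 4` (where `2 t v = ± δ / 2`) bounds `P[S ≥ (1 + δ)²]` and `P[S ≤ (1 - δ)²]` by the
`d`-th power of a one-variable expression; `log y ≥ 1 - 1 / y` bounds that expression by
`exp (-δ² / 10)`. Outside these two events `√S ∈ (1 - δ, 1 + δ)`.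
-/

open Real
open scoped NNReal

section Gaussian

variable {v : ℝ≥0} {t : ℝ}

lemma mgf_sq_gaussianReal (ht : 2 * t * v < 1) :
    mgf (fun x => x ^ 2) (gaussianReal 0 v) t = (√(1 - 2 * t * v))⁻¹ := by
  rcases eq_or_ne v 0 with rfl | hv
  · simp [mgf]
  have hv0 : (0 : ℝ) < v := by positivity
  have hb : 0 < 1 - 2 * t * v := by linarith
  have hdensity : ∀ x, gaussianPDFReal 0 v x • exp (t * x ^ 2) =
      (√(2 * π * v))⁻¹ * exp (-((1 - 2 * t * v) / (2 * v)) * x ^ 2) := by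
    intro x
    rw [gaussianPDFReal, smul_eq_mul, mul_assoc, ← Real.exp_add]
    congr 2
    field_simp
    ring
  rw [mgf, integral_gaussianReal_eq_integral_smul hv]
  simp_rw [hdensity]
  rw [integral_const_mul, integral_gaussian, div_div_eq_mul_div, Real.sqrt_div' _ hb.le]
  have : √(2 * π * v) ≠ 0 := by positivity
  field_simp

variable {ι : Type*} [Fintype ι]

lemma mgf_sum_sq_pi_gaussianReal (ht : 2 * t * v < 1) :
    mgf (fun x : ι → ℝ => ∑ i, x i ^ 2) (Measure.pi fun _ => gaussianReal 0 v) t =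
      (√(1 - 2 * t * v))⁻¹ ^ Fintype.card ι := by
  have hindep : iIndepFun (fun i (x : ι → ℝ) => x i ^ 2) (Measure.pi fun _ => gaussianReal 0 v) :=
    iIndepFun_pi (X := fun _ y => y ^ 2) fun _ => by fun_prop
  have hcoord : ∀ i, mgf (fun x : ι → ℝ => x i ^ 2) (Measure.pi fun _ => gaussianReal 0 v) t =
      (√(1 - 2 * t * v))⁻¹ := by
    intro i
    rw [show (fun x : ι → ℝ => x i ^ 2) = (fun y => y ^ 2) ∘ Function.eval i from rfl,
      ← mgf_map (X := fun y : ℝ => y ^ 2) (measurable_pi_apply i).aemeasurable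
        (by fun_prop),
      (measurePreserving_eval (fun _ : ι => gaussianReal 0 v) i).map_eq, mgf_sq_gaussianReal ht]
  rw [← Finset.sum_fn, hindep.mgf_sum (fun _ => by fun_prop)]
  simp [hcoord]

lemma integrable_exp_mul_sum_sq_pi_gaussianReal (ht : 2 * t * v < 1) :
    Integrable (fun x : ι → ℝ => exp (t * ∑ i, x i ^ 2))
      (Measure.pi fun _ => gaussianReal 0 v) := by
  have hb : 0 < 1 - 2 * t * v := by linarith
  rw [← mgf_pos_iff, mgf_sum_sq_pi_gaussianReal ht]
  positivity

lemma measureReal_le_sum_sq_le (ht₀ : 0 ≤ t) (ht : 2 * t * v < 1) (a : ℝ) :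
    (Measure.pi fun _ => gaussianReal 0 v).real {x : ι → ℝ | a ≤ ∑ i, x i ^ 2} ≤
      exp (-t * a) * (√(1 - 2 * t * v))⁻¹ ^ Fintype.card ι := by
  rw [← mgf_sum_sq_pi_gaussianReal ht]
  exact measure_ge_le_exp_mul_mgf a ht₀ (integrable_exp_mul_sum_sq_pi_gaussianReal ht)

lemma measureReal_sum_sq_le_le (ht₀ : 0 ≤ t) (a : ℝ) :
    (Measure.pi fun _ => gaussianReal 0 v).real {x : ι → ℝ | ∑ i, x i ^ 2 ≤ a} ≤
      exp (t * a) * (√(1 + 2 * t * v))⁻¹ ^ Fintype.card ι := by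
  have ht : 2 * -t * v < 1 := by nlinarith [v.2]
  have := measure_le_le_exp_mul_mgf a (neg_nonpos.2 ht₀)
    (integrable_exp_mul_sum_sq_pi_gaussianReal (ι := ι) ht)
  rwa [mgf_sum_sq_pi_gaussianReal ht, neg_neg, mul_neg, neg_mul, sub_neg_eq_add] at this

end Gaussian

lemma inv_sqrt_mul_exp_le_exp {y s r : ℝ} (hy : 0 < y) (h : 2 * (s - r) ≤ log y) :
    (√y)⁻¹ * exp s ≤ exp r := by
  have hsqrt : exp (s - r) ≤ √y := by
    rw [Real.le_sqrt (exp_pos _).le hy.le, ← exp_nat_mul, ← exp_log hy]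
    exact exp_le_exp.2 (by push_cast; linarith)
  rw [inv_mul_le_iff₀ (by positivity)]
  calc exp s = exp r * exp (s - r) := by rw [← exp_add]; ring_nf
    _ ≤ √y * exp r := by rw [mul_comm]; gcongr

variable {δ : ℝ}

lemma inv_sqrt_one_sub_mul_exp_le (h₀ : 0 ≤ δ) (h₁ : δ ≤ 1) :
    (√(1 - δ / 2))⁻¹ * exp (-(δ / 4) * (1 + δ) ^ 2) ≤ exp (-δ ^ 2 / 10) := by
  refine inv_sqrt_mul_exp_le_exp (by linarith) ((?_ : _ ≤ _).trans
    (one_sub_inv_le_log_of_pos (by linarith)))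
  have h2 : 2 - δ ≠ 0 := by linarith
  rw [show 1 - (1 - δ / 2)⁻¹ = -δ / (2 - δ) by field_simp; ring, le_div_iff₀ (by linarith)]
  nlinarith [mul_nonneg h₀ (sub_nonneg.2 h₁), mul_nonneg (mul_nonneg h₀ h₀) (sub_nonneg.2 h₁)]

lemma inv_sqrt_one_add_mul_exp_le (h₀ : 0 ≤ δ) (h₁ : δ ≤ 1) :
    (√(1 + δ / 2))⁻¹ * exp ((δ / 4) * (1 - δ) ^ 2) ≤ exp (-δ ^ 2 / 10) := by
  refine inv_sqrt_mul_exp_le_exp (by linarith) ((?_ : _ ≤ _).trans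
    (one_sub_inv_le_log_of_pos (by linarith)))
  have h2 : 2 + δ ≠ 0 := by linarith
  rw [show 1 - (1 + δ / 2)⁻¹ = δ / (2 + δ) by field_simp; ring, le_div_iff₀ (by linarith)]
  nlinarith [mul_nonneg h₀ (sub_nonneg.2 h₁), mul_nonneg (mul_nonneg h₀ h₀) (sub_nonneg.2 h₁)]

lemma sqrt_mem_Ioo_or_le_sq_or_sq_le {a b S : ℝ} (ha : 0 ≤ a) (hb : 0 ≤ b) :
    √S ∈ Set.Ioo a b ∨ S ≤ a ^ 2 ∨ b ^ 2 ≤ S := by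
  by_contra! h
  obtain ⟨hIoo, haS, hSb⟩ := h
  refine hIoo ⟨(Real.lt_sqrt ha).2 haS, ?_⟩
  calc √S < √(b ^ 2) := Real.sqrt_lt_sqrt (by nlinarith) hSb
    _ = b := Real.sqrt_sq hb

instance (d : ℕ) : IsProbabilityMeasure (gaussianVec d) := by
  unfold gaussianVec; infer_instance

section Tails

variable {d : ℕ}

lemma coe_two_mul_mul_inv_natCast (hd : 0 < d) :
    2 * (d * (δ / 4)) * (((d : ℝ≥0)⁻¹ : ℝ≥0) : ℝ) = δ / 2 := by
  push_cast
  field_simp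
  ring

lemma gaussianVec_real_le_sum_sq_le (hd : 0 < d) (h₀ : 0 ≤ δ) (h₁ : δ ≤ 1) :
    (gaussianVec d).real {x | (1 + δ) ^ 2 ≤ ∑ i, x i ^ 2} ≤ exp (-δ ^ 2 * d / 10) := by
  have ht := coe_two_mul_mul_inv_natCast (δ := δ) hd
  calc _ ≤ exp (-(d * (δ / 4)) * (1 + δ) ^ 2) * (√(1 - δ / 2))⁻¹ ^ d := by
        have := measureReal_le_sum_sq_le (ι := Fin d) (v := (d : ℝ≥0)⁻¹)
          (t := d * (δ / 4)) (by positivity) (by rw [ht]; linarith)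
          ((1 + δ) ^ 2)
        rwa [ht, Fintype.card_fin] at this
    _ = ((√(1 - δ / 2))⁻¹ * exp (-(δ / 4) * (1 + δ) ^ 2)) ^ d := by
        rw [mul_pow, ← exp_nat_mul]; ring_nf
    _ ≤ exp (-δ ^ 2 / 10) ^ d := by gcongr; exact inv_sqrt_one_sub_mul_exp_le h₀ h₁
    _ = exp (-δ ^ 2 * d / 10) := by rw [← exp_nat_mul]; ring_nf

lemma gaussianVec_real_sum_sq_le_le (hd : 0 < d) (h₀ : 0 ≤ δ) (h₁ : δ ≤ 1) :
    (gaussianVec d).real {x | ∑ i, x i ^ 2 ≤ (1 - δ) ^ 2} ≤ exp (-δ ^ 2 * d / 10) := by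
  have ht := coe_two_mul_mul_inv_natCast (δ := δ) hd
  calc _ ≤ exp (d * (δ / 4) * (1 - δ) ^ 2) * (√(1 + δ / 2))⁻¹ ^ d := by
        have := measureReal_sum_sq_le_le (ι := Fin d) (v := (d : ℝ≥0)⁻¹)
          (t := d * (δ / 4)) (by positivity) ((1 - δ) ^ 2)
        rwa [ht, Fintype.card_fin] at this
    _ = ((√(1 + δ / 2))⁻¹ * exp ((δ / 4) * (1 - δ) ^ 2)) ^ d := by
        rw [mul_pow, ← exp_nat_mul]; ring_nf
    _ ≤ exp (-δ ^ 2 / 10) ^ d := by gcongr; exact inv_sqrt_one_add_mul_exp_le h₀ h₁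
    _ = exp (-δ ^ 2 * d / 10) := by rw [← exp_nat_mul]; ring_nf

end Tails

/-- If `x ∈ ℝ^d` has i.i.d. `N(0, 1/d)` coordinates (`d ≥ 1`) and
`δ ∈ (0,1)`, then `P[‖x‖₂ ∈ (1 - δ, 1 + δ)] ≥ 1 - 2 exp(-δ² d / 10)`. -/
theorem stmt_6 (d : ℕ) (hd : 1 ≤ d) (δ : ℝ) (hδ0 : 0 < δ) (hδ1 : δ < 1) :
    1 - 2 * Real.exp (-δ ^ 2 * d / 10) ≤
      (gaussianVec d
        {x | Real.sqrt (∑ i, x i ^ 2) ∈ Set.Ioo (1 - δ) (1 + δ)}).toReal := by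
  set E := {x : Fin d → ℝ | Real.sqrt (∑ i, x i ^ 2) ∈ Set.Ioo (1 - δ) (1 + δ)}
  set A := {x : Fin d → ℝ | ∑ i, x i ^ 2 ≤ (1 - δ) ^ 2}
  set B := {x : Fin d → ℝ | (1 + δ) ^ 2 ≤ ∑ i, x i ^ 2}
  have hcover : Set.univ ⊆ E ∪ A ∪ B := fun x _ =>
    (sqrt_mem_Ioo_or_le_sq_or_sq_le (by linarith) (by linarith)).elim
      (fun h => Or.inl (Or.inl h)) (Or.imp_left Or.inr)
  have hA := gaussianVec_real_sum_sq_le_le hd hδ0.le hδ1.le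
  have hB := gaussianVec_real_le_sum_sq_le hd hδ0.le hδ1.le
  have hunion := measureReal_mono (μ := gaussianVec d) hcover
  have hEA := measureReal_union_le (μ := gaussianVec d) E A
  have hEAB := measureReal_union_le (μ := gaussianVec d) (E ∪ A) B
  rw [probReal_univ] at hunion
  change _ ≤ (gaussianVec d).real E
  linarith
end

section
/- There exists a universal constant K > 0 such that for every d > 0, every real Gaussian random variable X with mean 0 and variance 1/d, and all reals b and ε: |E[X | X ≤ (b+ε)/√d] + φ(b)/(Φ(b)√d)| ≤ K|ε|/√d and |E[X | X ≥ (b+ε)/√d] − φ(b)/((1−Φ(b))√d)| ≤ K|ε|/√d, where E[X | A] denotes E[X·1_A]/P[A]. -/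
/-!
Let `λ = φ / Φ` be the inverse Mills ratio. Writing `X = Z / √d` with `Z` standard normal, and
using the symmetry `Z ↦ -Z` for the upper tail, both estimates reduce to `E[Z | Z ≤ x] = -λ(x)`
and to `λ` being `1`-Lipschitz. Now `λ' = -λ (x + λ)`, and `0 ≤ λ (x + λ) ≤ 1`: the lower bound
says `E[Z | Z ≤ x] ≤ x`, and `1 - λ (x + λ)` is the variance of `Z` given `Z ≤ x`.
-/

open MeasureTheory ProbabilityTheory

/-- CDF of the standard normal distribution `N(0,1)`. -/
noncomputable def stdNormalCDF (t : ℝ) : ℝ :=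
  (gaussianReal 0 1 (Set.Iic t)).toReal

/-- Density of the standard normal distribution `N(0,1)`. -/
noncomputable def stdNormalPDF (t : ℝ) : ℝ :=
  Real.exp (-t ^ 2 / 2) / Real.sqrt (2 * Real.pi)

/-- Conditional expectation `E[X | A] = E[X·1_A] / P[A]` of the identity under a measure
`μ` on `ℝ`, given the event `A`. -/
noncomputable def condExpId (μ : Measure ℝ) (A : Set ℝ) : ℝ :=
  (∫ x in A, x ∂μ) / (μ A).toReal

open Real Set Filter Topology
open scoped NNReal

lemma stdNormalPDF_pos (x : ℝ) : 0 < stdNormalPDF x := by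
  unfold stdNormalPDF; positivity

lemma stdNormalPDF_neg (x : ℝ) : stdNormalPDF (-x) = stdNormalPDF x := by
  simp [stdNormalPDF]

lemma stdNormalPDF_eq_gaussianPDFReal : stdNormalPDF = gaussianPDFReal 0 1 := by
  ext x
  simp [stdNormalPDF, gaussianPDFReal, div_eq_inv_mul]

lemma continuous_stdNormalPDF : Continuous stdNormalPDF := by
  unfold stdNormalPDF; fun_prop

lemma hasDerivAt_stdNormalPDF (x : ℝ) :
    HasDerivAt stdNormalPDF (-(x * stdNormalPDF x)) x := by
  unfold stdNormalPDF
  refine (((hasDerivAt_pow 2 x).neg.div_const 2).exp.div_const (√(2 * π))).congr_deriv ?_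
  simp only [Pi.neg_apply]; push_cast; ring

lemma integrable_pow_mul_stdNormalPDF (n : ℕ) :
    Integrable fun x => x ^ n * stdNormalPDF x := by
  have h := (integrable_rpow_mul_exp_neg_mul_sq (b := 1 / 2) (by norm_num)
    (s := n) (by linarith [n.cast_nonneg (α := ℝ)])).div_const (sqrt (2 * π))
  refine h.congr (Eventually.of_forall fun x => ?_)
  simp only [rpow_natCast, stdNormalPDF]
  ring_nf

lemma integrable_stdNormalPDF : Integrable stdNormalPDF := by
  simpa using integrable_pow_mul_stdNormalPDF 0

lemma integrable_mul_stdNormalPDF : Integrable fun x => x * stdNormalPDF x := by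
  simpa using integrable_pow_mul_stdNormalPDF 1

lemma tendsto_stdNormalPDF_atBot : Tendsto stdNormalPDF atBot (𝓝 0) :=
  tendsto_zero_of_hasDerivAt_of_integrableOn_Iic (a := 0)
    (fun x _ => hasDerivAt_stdNormalPDF x) integrable_mul_stdNormalPDF.neg.integrableOn
    integrable_stdNormalPDF.integrableOn

lemma hasDerivAt_mul_stdNormalPDF (x : ℝ) :
    HasDerivAt (fun t => t * stdNormalPDF t) (stdNormalPDF x - x ^ 2 * stdNormalPDF x) x := by
  refine ((hasDerivAt_id' x).mul (hasDerivAt_stdNormalPDF x)).congr_deriv ?_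
  ring

lemma tendsto_mul_stdNormalPDF_atBot : Tendsto (fun x => x * stdNormalPDF x) atBot (𝓝 0) :=
  tendsto_zero_of_hasDerivAt_of_integrableOn_Iic (a := 0)
    (fun x _ => hasDerivAt_mul_stdNormalPDF x)
    (integrable_stdNormalPDF.sub (integrable_pow_mul_stdNormalPDF 2)).integrableOn
    integrable_mul_stdNormalPDF.integrableOn

lemma setIntegral_Iic_mul_stdNormalPDF (x : ℝ) :
    ∫ t in Iic x, t * stdNormalPDF t = -stdNormalPDF x := by
  have hderiv (t : ℝ) : HasDerivAt (fun t => -stdNormalPDF t) (t * stdNormalPDF t) t :=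
    (hasDerivAt_stdNormalPDF t).neg.congr_deriv (neg_neg _)
  have h := integral_Iic_of_hasDerivAt_of_tendsto' (a := x) (fun t _ => hderiv t)
    integrable_mul_stdNormalPDF.integrableOn tendsto_stdNormalPDF_atBot.neg
  simpa using h

lemma setIntegral_gaussianReal_zero_one {A : Set ℝ} (hA : MeasurableSet A) (f : ℝ → ℝ) :
    ∫ x in A, f x ∂gaussianReal 0 1 = ∫ x in A, f x * stdNormalPDF x := by
  rw [gaussianReal_of_var_ne_zero 0 one_ne_zero, restrict_withDensity hA,
    integral_withDensity_eq_integral_toReal_smul (measurable_gaussianPDF _ _)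
      (ae_of_all _ fun _ ↦ gaussianPDF_lt_top)]
  simp [toReal_gaussianPDF, stdNormalPDF_eq_gaussianPDFReal, mul_comm]

lemma setIntegral_Iic_stdNormalPDF (x : ℝ) :
    ∫ t in Iic x, stdNormalPDF t = stdNormalCDF x := by
  simpa [stdNormalCDF, measureReal_def] using
    (setIntegral_gaussianReal_zero_one measurableSet_Iic fun _ => 1).symm

lemma setIntegral_Iic_sq_mul_stdNormalPDF (x : ℝ) :
    ∫ t in Iic x, t ^ 2 * stdNormalPDF t = stdNormalCDF x - x * stdNormalPDF x := by
  have h := integral_Iic_of_hasDerivAt_of_tendsto' (a := x)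
    (fun t _ => hasDerivAt_mul_stdNormalPDF t)
    (integrable_stdNormalPDF.sub (integrable_pow_mul_stdNormalPDF 2)).integrableOn
    tendsto_mul_stdNormalPDF_atBot
  rw [integral_sub integrable_stdNormalPDF.integrableOn
    (integrable_pow_mul_stdNormalPDF 2).integrableOn, setIntegral_Iic_stdNormalPDF] at h
  linarith

lemma stdNormalCDF_pos (x : ℝ) : 0 < stdNormalCDF x := by
  refine ENNReal.toReal_pos (fun h => ?_) (measure_ne_top _ _)
  simpa using gaussianReal_absolutelyContinuous' 0 one_ne_zero h

lemma hasDerivAt_stdNormalCDF (x : ℝ) : HasDerivAt stdNormalCDF (stdNormalPDF x) x := by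
  have hΦ : stdNormalCDF = fun t => stdNormalCDF 0 + ∫ u in (0 : ℝ)..t, stdNormalPDF u := by
    ext t
    rw [← setIntegral_Iic_stdNormalPDF, ← setIntegral_Iic_stdNormalPDF,
      ← intervalIntegral.integral_Iic_sub_Iic integrable_stdNormalPDF.integrableOn
        integrable_stdNormalPDF.integrableOn]
    ring
  rw [hΦ]
  exact (intervalIntegral.integral_hasDerivAt_right integrable_stdNormalPDF.intervalIntegrable
    continuous_stdNormalPDF.stronglyMeasurable.stronglyMeasurableAtFilter
    continuous_stdNormalPDF.continuousAt).const_add _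

lemma measure_Iic_neg_of_map_neg {μ : Measure ℝ} (hμ : μ.map (fun x => -x) = μ) (t : ℝ) :
    μ (Iic (-t)) = μ (Ici t) := by
  conv_lhs => rw [← hμ]
  rw [Measure.map_apply measurable_neg measurableSet_Iic]
  congr 1
  ext; simp

lemma setIntegral_Iic_neg_of_map_neg {μ : Measure ℝ} (hμ : μ.map (fun x => -x) = μ) (t : ℝ) :
    ∫ x in Iic (-t), x ∂μ = -∫ x in Ici t, x ∂μ := by
  conv_lhs => rw [← hμ]
  rw [setIntegral_map (f := fun x => x) measurableSet_Iic aestronglyMeasurable_id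
      measurable_neg.aemeasurable,
    integral_neg]
  congr 2
  ext; simp

lemma condExpId_Ici_of_map_neg {μ : Measure ℝ} (hμ : μ.map (fun x => -x) = μ) (t : ℝ) :
    condExpId μ (Ici t) = -condExpId μ (Iic (-t)) := by
  rw [condExpId, condExpId, measure_Iic_neg_of_map_neg hμ, setIntegral_Iic_neg_of_map_neg hμ,
    neg_div, neg_neg]

lemma gaussianReal_zero_map_neg (v : ℝ≥0) :
    (gaussianReal 0 v).map (fun x => -x) = gaussianReal 0 v := by
  simpa using gaussianReal_map_neg (μ := 0) (v := v)

lemma stdNormalCDF_neg (x : ℝ) : stdNormalCDF (-x) = 1 - stdNormalCDF x := by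
  have := nullSingletonClass_gaussianReal (μ := 0) (one_ne_zero (α := ℝ≥0))
  rw [stdNormalCDF, measure_Iic_neg_of_map_neg (gaussianReal_zero_map_neg 1),
    measure_congr Ioi_ae_eq_Ici.symm, ← compl_Iic, prob_compl_eq_one_sub measurableSet_Iic,
    ENNReal.toReal_sub_of_le prob_le_one ENNReal.one_ne_top, ENNReal.toReal_one, stdNormalCDF]

lemma stdNormalPDF_add_mul_stdNormalCDF_nonneg (x : ℝ) :
    0 ≤ stdNormalPDF x + x * stdNormalCDF x := by
  have h : ∫ t in Iic x, (x - t) * stdNormalPDF t = stdNormalPDF x + x * stdNormalCDF x := by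
    simp_rw [sub_mul, mul_comm x]
    rw [integral_sub (integrable_stdNormalPDF.mul_const x).integrableOn
        integrable_mul_stdNormalPDF.integrableOn, integral_mul_const,
      setIntegral_Iic_stdNormalPDF, setIntegral_Iic_mul_stdNormalPDF]
    ring
  rw [← h]
  exact setIntegral_nonneg measurableSet_Iic fun t ht =>
    mul_nonneg (sub_nonneg.2 ht) (stdNormalPDF_pos t).le

lemma sq_stdNormalPDF_le (x : ℝ) :
    stdNormalPDF x ^ 2 ≤ stdNormalCDF x * (stdNormalCDF x - x * stdNormalPDF x) := by
  set Φ := stdNormalCDF x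
  set φ := stdNormalPDF x
  have h : ∫ t in Iic x, (Φ * t + φ) ^ 2 * stdNormalPDF t = Φ * (Φ * (Φ - x * φ) - φ ^ 2) := by
    have hexpand : (fun t => (Φ * t + φ) ^ 2 * stdNormalPDF t) = fun t =>
        Φ ^ 2 * (t ^ 2 * stdNormalPDF t) + 2 * Φ * φ * (t * stdNormalPDF t) +
          φ ^ 2 * stdNormalPDF t := by
      ext t; ring
    have i2 := (integrable_pow_mul_stdNormalPDF 2).const_mul (Φ ^ 2)
    have i1 := integrable_mul_stdNormalPDF.const_mul (2 * Φ * φ)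
    have i0 := integrable_stdNormalPDF.const_mul (φ ^ 2)
    rw [hexpand, integral_add (i2.fun_add i1).integrableOn i0.integrableOn,
      integral_add i2.integrableOn i1.integrableOn, integral_const_mul, integral_const_mul,
      integral_const_mul, setIntegral_Iic_sq_mul_stdNormalPDF, setIntegral_Iic_mul_stdNormalPDF,
      setIntegral_Iic_stdNormalPDF]
    ring
  have hnonneg : 0 ≤ ∫ t in Iic x, (Φ * t + φ) ^ 2 * stdNormalPDF t :=
    setIntegral_nonneg measurableSet_Iic fun t _ => mul_nonneg (sq_nonneg _) (stdNormalPDF_pos t).le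
  rw [h] at hnonneg
  have := nonneg_of_mul_nonneg_right hnonneg (stdNormalCDF_pos x)
  linarith

noncomputable def invMillsRatio (x : ℝ) : ℝ := stdNormalPDF x / stdNormalCDF x

lemma hasDerivAt_invMillsRatio (x : ℝ) :
    HasDerivAt invMillsRatio (-(invMillsRatio x * (x + invMillsRatio x))) x := by
  refine ((hasDerivAt_stdNormalPDF x).div (hasDerivAt_stdNormalCDF x)
    (stdNormalCDF_pos x).ne').congr_deriv ?_
  have := (stdNormalCDF_pos x).ne'
  simp only [invMillsRatio]
  field_simp
  ring

lemma invMillsRatio_mul_add_nonneg (x : ℝ) : 0 ≤ invMillsRatio x * (x + invMillsRatio x) := by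
  have hΦ := stdNormalCDF_pos x
  have h : x + invMillsRatio x = (stdNormalPDF x + x * stdNormalCDF x) / stdNormalCDF x := by
    rw [invMillsRatio, add_comm, div_add' _ _ _ hΦ.ne']
  rw [h]
  exact mul_nonneg (div_nonneg (stdNormalPDF_pos x).le hΦ.le)
    (div_nonneg (stdNormalPDF_add_mul_stdNormalCDF_nonneg x) hΦ.le)

lemma invMillsRatio_mul_add_le_one (x : ℝ) : invMillsRatio x * (x + invMillsRatio x) ≤ 1 := by
  have hΦ := stdNormalCDF_pos x
  have h : invMillsRatio x * (x + invMillsRatio x) =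
      (x * stdNormalPDF x * stdNormalCDF x + stdNormalPDF x ^ 2) / stdNormalCDF x ^ 2 := by
    simp only [invMillsRatio]
    field_simp
  rw [h, div_le_one (by positivity)]
  nlinarith [sq_stdNormalPDF_le x]

lemma lipschitzWith_one_invMillsRatio : LipschitzWith 1 invMillsRatio := by
  refine lipschitzWith_of_nnnorm_deriv_le
    (fun x => (hasDerivAt_invMillsRatio x).differentiableAt) fun x => ?_
  rw [← NNReal.coe_le_coe, coe_nnnorm, (hasDerivAt_invMillsRatio x).deriv, norm_neg,
    Real.norm_of_nonneg (invMillsRatio_mul_add_nonneg x), NNReal.coe_one]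
  exact invMillsRatio_mul_add_le_one x

lemma condExpId_gaussianReal_zero_one_Iic (x : ℝ) :
    condExpId (gaussianReal 0 1) (Iic x) = -invMillsRatio x := by
  rw [condExpId, setIntegral_gaussianReal_zero_one measurableSet_Iic,
    setIntegral_Iic_mul_stdNormalPDF, invMillsRatio, neg_div]
  rfl

lemma condExpId_map_div_const_Iic (μ : Measure ℝ) {c : ℝ} (hc : 0 < c) (t : ℝ) :
    condExpId (μ.map (· / c)) (Iic t) = condExpId μ (Iic (c * t)) / c := by
  have hpre : (· / c) ⁻¹' Iic t = Iic (c * t) := by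
    ext x; simp [div_le_iff₀ hc, mul_comm]
  have hmeas : Measurable (· / c : ℝ → ℝ) := measurable_id.div_const c
  rw [condExpId, condExpId, Measure.map_apply hmeas measurableSet_Iic,
    setIntegral_map (f := fun x => x) measurableSet_Iic aestronglyMeasurable_id
      hmeas.aemeasurable, hpre, integral_div, div_right_comm]

lemma gaussianReal_inv_var_eq_map (d : ℝ) (hd : 0 < d) :
    gaussianReal 0 (1 / d).toNNReal = (gaussianReal 0 1).map (· / √d) := by
  rw [gaussianReal_map_div_const, zero_div]
  congr 1
  ext
  simp [sq_sqrt hd.le, hd.le]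

lemma condExpId_gaussianReal_inv_var_Iic {d : ℝ} (hd : 0 < d) (x : ℝ) :
    condExpId (gaussianReal 0 (1 / d).toNNReal) (Iic (x / √d)) = -invMillsRatio x / √d := by
  rw [gaussianReal_inv_var_eq_map d hd, condExpId_map_div_const_Iic _ (sqrt_pos.2 hd),
    mul_div_cancel₀ x (sqrt_pos.2 hd).ne', condExpId_gaussianReal_zero_one_Iic]

lemma abs_condExpId_gaussianReal_inv_var_Iic_add_le {d : ℝ} (hd : 0 < d) (b ε : ℝ) :
    |condExpId (gaussianReal 0 (1 / d).toNNReal) (Iic ((b + ε) / √d)) +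
      stdNormalPDF b / (stdNormalCDF b * √d)| ≤ |ε| / √d := by
  rw [condExpId_gaussianReal_inv_var_Iic hd, ← div_div, ← invMillsRatio, neg_div,
    neg_add_eq_sub, ← sub_div, abs_div, abs_of_pos (sqrt_pos.2 hd)]
  refine div_le_div_of_nonneg_right ?_ (sqrt_nonneg d)
  simpa [Real.dist_eq, abs_sub_comm] using lipschitzWith_one_invMillsRatio.dist_le_mul b (b + ε)

/-- There is a universal `K > 0` such that for all `d > 0`,
`X ~ N(0, 1/d)` and all reals `b, ε`:
`|E[X | X ≤ (b+ε)/√d] + φ(b)/(Φ(b)√d)| ≤ K|ε|/√d` and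
`|E[X | X ≥ (b+ε)/√d] - φ(b)/((1-Φ(b))√d)| ≤ K|ε|/√d`. -/
theorem stmt_9 :
    ∃ K : ℝ, 0 < K ∧ ∀ d : ℝ, 0 < d → ∀ b ε : ℝ,
      |condExpId (gaussianReal 0 (Real.toNNReal (1 / d))) (Set.Iic ((b + ε) / Real.sqrt d)) +
          stdNormalPDF b / (stdNormalCDF b * Real.sqrt d)| ≤ K * |ε| / Real.sqrt d ∧
      |condExpId (gaussianReal 0 (Real.toNNReal (1 / d))) (Set.Ici ((b + ε) / Real.sqrt d)) -
          stdNormalPDF b / ((1 - stdNormalCDF b) * Real.sqrt d)| ≤ K * |ε| / Real.sqrt d := by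
  refine ⟨1, one_pos, fun d hd b ε => ?_⟩
  rw [one_mul]
  refine ⟨abs_condExpId_gaussianReal_inv_var_Iic_add_le hd b ε, ?_⟩
  have h := abs_condExpId_gaussianReal_inv_var_Iic_add_le hd (-b) (-ε)
  rw [stdNormalPDF_neg, stdNormalCDF_neg, abs_neg, ← neg_add, neg_div] at h
  rw [condExpId_Ici_of_map_neg (gaussianReal_zero_map_neg _), ← abs_neg]
  convert h using 2
  ring
end

section
/- Let X be a real random variable with E[X] = 0 which is subgaussian with variance proxy σ² > 0, i.e. E[exp(tX)] ≤ exp(σ²t²/2) for all t ∈ ℝ. Then for every λ with 0 ≤ λ < 1/(2σ²), one has E[exp(λX²)] ≤ 1 + 4λσ²/(1 − 2λσ²). -/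
/-!
The hypothesis says that `X` is sub-Gaussian in Mathlib's sense (`HasSubgaussianMGF`), so the
Chernoff bound applied to `X` and `-X` gives `P(|X| ≥ t) ≤ 2 exp(-t²/(2σ²))`. Writing
`exp(λx²) = 1 + ∫₀^|x| 2λt exp(λt²) dt` and using the layer-cake formula,
`E[exp(λX²)] = 1 + ∫₀^∞ 2λt exp(λt²) P(|X| ≥ t) dt ≤ 1 + 4λ ∫₀^∞ t exp(-at²) dt = 1 + 2λ/a`
with `a = 1/(2σ²) - λ > 0`, and `2λ/a = 4λσ²/(1 - 2λσ²)`.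
-/

open MeasureTheory ProbabilityTheory Real Set
open scoped NNReal

theorem integral_Ioi_mul_exp_neg_mul_sq {b : ℝ} (hb : 0 < b) :
    ∫ r in Ioi 0, r * exp (-b * r ^ 2) = (2 * b)⁻¹ := by
  have h := integral_mul_cexp_neg_mul_sq (b := b) (by simpa using hb)
  apply Complex.ofReal_injective
  rw [← integral_complex_ofReal]
  push_cast
  simpa using h

namespace ProbabilityTheory

variable {Ω : Type*} [MeasurableSpace Ω] {μ : Measure Ω} {X : Ω → ℝ} {c : ℝ≥0}

lemma hasSubgaussianMGF_of_lintegral_exp_le (hX : AEMeasurable X μ)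
    (h : ∀ t : ℝ, ∫⁻ ω, ENNReal.ofReal (exp (t * X ω)) ∂μ ≤ ENNReal.ofReal (exp (c * t ^ 2 / 2))) :
    HasSubgaussianMGF X c μ where
  integrable_exp_mul t := by
    refine ⟨(hX.const_mul t).exp.aestronglyMeasurable, ?_⟩
    rw [hasFiniteIntegral_iff_ofReal (ae_of_all _ fun _ => (exp_pos _).le)]
    exact (h t).trans_lt ENNReal.ofReal_lt_top
  mgf_le t := by
    rw [mgf, integral_eq_lintegral_of_nonneg_ae (ae_of_all _ fun _ => (exp_pos _).le)
      (hX.const_mul t).exp.aestronglyMeasurable]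
    exact ENNReal.toReal_le_of_le_ofReal (exp_pos _).le (h t)

lemma HasSubgaussianMGF.measureReal_abs_ge_le [IsFiniteMeasure μ] (h : HasSubgaussianMGF X c μ)
    {ε : ℝ} (hε : 0 ≤ ε) :
    μ.real {ω | ε ≤ |X ω|} ≤ 2 * exp (-ε ^ 2 / (2 * c)) := by
  have hsplit : {ω | ε ≤ |X ω|} = {ω | ε ≤ X ω} ∪ {ω | ε ≤ (-X) ω} := by
    ext ω; simp [le_abs]
  calc μ.real {ω | ε ≤ |X ω|} ≤ μ.real {ω | ε ≤ X ω} + μ.real {ω | ε ≤ (-X) ω} :=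
        hsplit ▸ measureReal_union_le _ _
    _ ≤ 2 * exp (-ε ^ 2 / (2 * c)) := by
        linarith [h.measure_ge_le hε, h.neg.measure_ge_le hε]

lemma lintegral_exp_mul_sq_eq {l : ℝ} (hl : 0 ≤ l) (hX : AEMeasurable X μ) :
    ∫⁻ ω, ENNReal.ofReal (exp (l * X ω ^ 2)) ∂μ =
      μ univ + ∫⁻ t in Ioi 0, μ {ω | t ≤ |X ω|} * ENNReal.ofReal (2 * l * t * exp (l * t ^ 2)) := by
  have hderiv (x : ℝ) : HasDerivAt (fun s => exp (l * s ^ 2)) (2 * l * x * exp (l * x ^ 2)) x := by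
    convert ((hasDerivAt_pow 2 x).const_mul l).exp using 1
    ring
  have hcont : Continuous fun s : ℝ => 2 * l * s * exp (l * s ^ 2) := by fun_prop
  have hFTC (x : ℝ) : ENNReal.ofReal (exp (l * x ^ 2)) =
      1 + ENNReal.ofReal (∫ s in (0 : ℝ)..|x|, 2 * l * s * exp (l * s ^ 2)) := by
    rw [intervalIntegral.integral_eq_sub_of_hasDerivAt (fun s _ => hderiv s)
      (hcont.intervalIntegrable _ _), sq_abs, ← ENNReal.ofReal_one, ← ENNReal.ofReal_add zero_le_one]
    · simp
    · simpa using one_le_exp (by positivity)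
  simp_rw [hFTC]
  rw [lintegral_add_left measurable_const, lintegral_const, one_mul,
    lintegral_comp_eq_lintegral_meas_le_mul μ (ae_of_all _ fun _ => abs_nonneg _) hX.abs
      (fun t _ => hcont.intervalIntegrable _ _)]
  filter_upwards [self_mem_ae_restrict measurableSet_Ioi] with t (ht : 0 < t)
  positivity

end ProbabilityTheory

theorem stmt_10_general {Ω : Type*} [MeasurableSpace Ω] (μ : Measure Ω) [IsProbabilityMeasure μ]
    (X : Ω → ℝ) (hX : Measurable X)
    (σ2 : ℝ) (hσ2 : 0 < σ2)
    (hsub : ∀ t : ℝ, (∫⁻ ω, ENNReal.ofReal (Real.exp (t * X ω)) ∂μ) ≤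
      ENNReal.ofReal (Real.exp (σ2 * t ^ 2 / 2)))
    (l : ℝ) (hl0 : 0 ≤ l) (hl : l < 1 / (2 * σ2)) :
    (∫⁻ ω, ENNReal.ofReal (Real.exp (l * X ω ^ 2)) ∂μ) ≤
      ENNReal.ofReal (1 + 4 * l * σ2 / (1 - 2 * l * σ2)) := by
  have hden : 0 < 1 - 2 * l * σ2 := by
    rw [lt_div_iff₀ (by positivity)] at hl
    linarith
  lift σ2 to ℝ≥0 using hσ2.le
  have hXsub : HasSubgaussianMGF X σ2 μ :=
    hasSubgaussianMGF_of_lintegral_exp_le hX.aemeasurable hsub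
  obtain ⟨a, ha, ha_def⟩ : ∃ a, 0 < a ∧ 1 / (2 * σ2) - l = a := ⟨_, by linarith, rfl⟩
  have htail (t : ℝ) (ht : 0 < t) :
      μ {ω | t ≤ |X ω|} * ENNReal.ofReal (2 * l * t * exp (l * t ^ 2)) ≤
        ENNReal.ofReal (4 * l * (t * exp (-a * t ^ 2))) := by
    rw [← ofReal_measureReal, ← ENNReal.ofReal_mul measureReal_nonneg]
    apply ENNReal.ofReal_le_ofReal
    calc μ.real {ω | t ≤ |X ω|} * (2 * l * t * exp (l * t ^ 2))
        ≤ 2 * exp (-t ^ 2 / (2 * σ2)) * (2 * l * t * exp (l * t ^ 2)) := by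
          gcongr
          exact hXsub.measureReal_abs_ge_le ht.le
      _ = 4 * l * (t * exp (-a * t ^ 2)) := by
          rw [← ha_def, mul_mul_mul_comm, mul_comm (exp _), ← exp_add]
          ring_nf
  have hint : IntegrableOn (fun t => 4 * l * (t * exp (-a * t ^ 2))) (Ioi 0) :=
    (integrable_mul_exp_neg_mul_sq ha).integrableOn.const_mul _
  calc ∫⁻ ω, ENNReal.ofReal (exp (l * X ω ^ 2)) ∂μ
      = 1 + ∫⁻ t in Ioi 0, μ {ω | t ≤ |X ω|} * ENNReal.ofReal (2 * l * t * exp (l * t ^ 2)) := by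
        rw [lintegral_exp_mul_sq_eq hl0 hX.aemeasurable, measure_univ]
    _ ≤ 1 + ∫⁻ t in Ioi 0, ENNReal.ofReal (4 * l * (t * exp (-a * t ^ 2))) := by
        gcongr 1 + ?_
        exact setLIntegral_mono' measurableSet_Ioi htail
    _ = ENNReal.ofReal (1 + 4 * l * σ2 / (1 - 2 * l * σ2)) := by
        rw [← ofReal_integral_eq_lintegral_ofReal hint, integral_const_mul,
          integral_Ioi_mul_exp_neg_mul_sq ha, ← ENNReal.ofReal_one,
          ← ENNReal.ofReal_add zero_le_one (by positivity)]
        · congr 2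
          rw [← ha_def]
          field_simp
        · filter_upwards [self_mem_ae_restrict measurableSet_Ioi] with t (ht : 0 < t)
          positivity

/-- If `X` is a centered random variable which is subgaussian with
variance proxy `σ² > 0` (i.e. `E[exp(tX)] ≤ exp(σ²t²/2)` for all `t`), then for every
`0 ≤ λ < 1/(2σ²)` one has `E[exp(λX²)] ≤ 1 + 4λσ²/(1 - 2λσ²)`. -/
theorem stmt_10 {Ω : Type*} [MeasurableSpace Ω] (μ : Measure Ω) [IsProbabilityMeasure μ]
    (X : Ω → ℝ) (hX : Measurable X) (hXint : Integrable X μ)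
    (hX0 : (∫ ω, X ω ∂μ) = 0)
    (σ2 : ℝ) (hσ2 : 0 < σ2)
    (hsub : ∀ t : ℝ, (∫⁻ ω, ENNReal.ofReal (Real.exp (t * X ω)) ∂μ) ≤
      ENNReal.ofReal (Real.exp (σ2 * t ^ 2 / 2)))
    (l : ℝ) (hl0 : 0 ≤ l) (hl : l < 1 / (2 * σ2)) :
    (∫⁻ ω, ENNReal.ofReal (Real.exp (l * X ω ^ 2)) ∂μ) ≤
      ENNReal.ofReal (1 + 4 * l * σ2 / (1 - 2 * l * σ2)) :=
  stmt_10_general μ X hX σ2 hσ2 hsub l hl0 hl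
end
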